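/- arXiv:2605.13283 — 3 statements merged into one kernel-verified Lean document; each statement's English description precedes it below -/
import Mathlib

section
/- Deterministic trimmed-mean aggregation bound: Let m be a positive integer, let M ⊆ {1,...,m} be the set of honest indices with |M| = (1−α)m and B = {1,...,m} \ M the Byzantine set with |B| = αm. Given real numbers g^{(1)},...,g^{(m)} and any μ ∈ ℝ, let trmean_β denote the β-trimmed mean, which removes the βm smallest and βm largest values and averages the remaining (1−2β)m values. If β > α (and βm, αm are integers with β < 1/2), then |trmean_β{g^{(k)} : k ∈ [m]} − μ| ≤ (1/((1−2β)m))·|Σ_{k ∈ M}(g^{(k)} − μ)| + ((2β + α)/(1−2β))·max_{k ∈ M}|g^{(k)} − μ|. -/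
/-!
Since there are fewer Byzantine indices (`αm`) than trimmed indices on either side (`βm`), each
side trims an honest index; hence every untrimmed value lies between two honest values and is
within `max_{k ∈ M} |g k - μ|` of `μ`. The untrimmed set `U` and the honest set `M` differ in at
most `αm` indices of `U \ M ⊆ Mᶜ` and `2βm` indices of `M \ U ⊆ Tlo ∪ Thi`, which bounds
`|∑_{U} (g k - μ) - ∑_{M} (g k - μ)|` by `(α + 2β) m max_{k ∈ M} |g k - μ|`.
-/

open Finset

section

variable {ι α : Type*} [AddCommGroup α] [LinearOrder α] [IsOrderedAddMonoid α]

theorem Finset.abs_sum_le_card_nsmul (s : Finset ι) (f : ι → α) {G : α}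
    (h : ∀ i ∈ s, |f i| ≤ G) : |∑ i ∈ s, f i| ≤ #s • G :=
  (abs_sum_le_sum_abs f s).trans (sum_le_card_nsmul s _ G h)

theorem Finset.abs_sum_sub_sum_le_card_sdiff_add_card_sdiff_nsmul [DecidableEq ι]
    (s t : Finset ι) (f : ι → α) {G : α} (hs : ∀ i ∈ s, |f i| ≤ G) (ht : ∀ i ∈ t, |f i| ≤ G) :
    |∑ i ∈ s, f i - ∑ i ∈ t, f i| ≤ (#(s \ t) + #(t \ s)) • G := by
  rw [← sum_sdiff_sub_sum_sdiff, add_nsmul]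
  exact (abs_sub _ _).trans <| add_le_add
    (abs_sum_le_card_nsmul _ f fun i hi => hs i (mem_sdiff.1 hi).1)
    (abs_sum_le_card_nsmul _ f fun i hi => ht i (mem_sdiff.1 hi).1)

theorem Finset.abs_sum_compl_le_abs_sum_add_nsmul [Fintype ι] [DecidableEq ι] (f : ι → α)
    {M T : Finset ι} {G : α} (hG : 0 ≤ G) (hM : ∀ i ∈ M, |f i| ≤ G)
    (hT : ∀ i ∉ T, |f i| ≤ G) :
    |∑ i ∈ Tᶜ, f i| ≤ |∑ i ∈ M, f i| + (#Mᶜ + #T) • G := calc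
  _ ≤ |∑ i ∈ M, f i| + |∑ i ∈ Tᶜ, f i - ∑ i ∈ M, f i| :=
    sub_le_iff_le_add'.1 (abs_sub_abs_le_abs_sub _ _)
  _ ≤ |∑ i ∈ M, f i| + (#(Tᶜ \ M) + #(M \ Tᶜ)) • G := by
    gcongr
    exact abs_sum_sub_sum_le_card_sdiff_add_card_sdiff_nsmul _ _ f
      (fun i hi => hT i (mem_compl.1 hi)) hM
  _ ≤ _ := by
    rw [sdiff_eq_inter_compl, sdiff_compl]
    gcongr <;> exact inter_subset_right

theorem Finset.exists_mem_mem_of_card_compl_lt [Fintype ι] [DecidableEq ι] {M T : Finset ι}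
    (h : #Mᶜ < #T) : ∃ i ∈ T, i ∈ M := by
  obtain ⟨i, hiT, hiM⟩ := exists_mem_notMem_of_card_lt_card h
  exact ⟨i, hiT, by simpa using hiM⟩

theorem abs_sub_le_of_notMem_trimmed [DecidableEq ι] {g : ι → α} {μ G : α}
    {M Tlo Thi : Finset ι}
    (hlo : ∀ i ∈ Tlo, ∀ j ∉ Tlo, g i ≤ g j) (hhi : ∀ i ∈ Thi, ∀ j ∉ Thi, g j ≤ g i)
    (hM : ∀ i ∈ M, |g i - μ| ≤ G) (hloM : ∃ i ∈ Tlo, i ∈ M) (hhiM : ∃ j ∈ Thi, j ∈ M)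
    {k : ι} (hk : k ∉ Tlo ∪ Thi) : |g k - μ| ≤ G := by
  obtain ⟨i, hi, hiM⟩ := hloM
  obtain ⟨j, hj, hjM⟩ := hhiM
  rw [mem_union, not_or] at hk
  exact (abs_le_max_abs_abs (sub_le_sub_right (hlo i hi k hk.1) μ)
    (sub_le_sub_right (hhi j hj k hk.2) μ)).trans (max_le (hM i hiM) (hM j hjM))

end

theorem Finset.sum_div_card_sub_eq_sum_sub_div {ι 𝕜 : Type*} [Field 𝕜] (s : Finset ι) (g : ι → 𝕜)
    (μ : 𝕜) (hs : (#s : 𝕜) ≠ 0) :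
    (∑ k ∈ s, g k) / #s - μ = (∑ k ∈ s, (g k - μ)) / #s := by
  rw [sum_sub_distrib, sum_const, nsmul_eq_mul, sub_div, mul_div_cancel_left₀ _ hs]

theorem trimmed_mean_bound_general (m : ℕ) (hm : 0 < m) (α β : ℝ)
    (hαβ : α < β) (hβ : β < 1 / 2)
    (g : Fin m → ℝ) (μ : ℝ)
    (M : Finset (Fin m)) (hMne : M.Nonempty)
    (hBcard : (Mᶜ.card : ℝ) = α * m)
    (Tlo Thi : Finset (Fin m)) (hdisj : Disjoint Tlo Thi)
    (hTlo : (Tlo.card : ℝ) = β * m) (hThi : (Thi.card : ℝ) = β * m)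
    (hlo : ∀ i ∈ Tlo, ∀ j ∉ Tlo, g i ≤ g j)
    (hhi : ∀ i ∈ Thi, ∀ j ∉ Thi, g j ≤ g i) :
    |(∑ k ∈ (Tlo ∪ Thi)ᶜ, g k) / ((1 - 2 * β) * m) - μ| ≤
      (1 / ((1 - 2 * β) * m)) * |∑ k ∈ M, (g k - μ)| +
        ((2 * β + α) / (1 - 2 * β)) * M.sup' hMne (fun k => |g k - μ|) := by
  set G := M.sup' hMne fun k => |g k - μ|
  have hD : 0 < (1 - 2 * β) * m := mul_pos (by linarith) (by exact_mod_cast hm)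
  have hTcard : (#(Tlo ∪ Thi) : ℝ) = 2 * β * m := by
    rw [card_union_of_disjoint hdisj]; push_cast; rw [hTlo, hThi]; ring
  have hUcard : (#(Tlo ∪ Thi)ᶜ : ℝ) = (1 - 2 * β) * m := by
    rw [card_compl, Fintype.card_fin, Nat.cast_sub (card_le_univ _ |>.trans_eq (by simp)),
      hTcard]; ring
  have hHonest : ∀ k ∈ M, |g k - μ| ≤ G := fun k hk => le_sup' (fun k => |g k - μ|) hk
  have hG : 0 ≤ G := (abs_nonneg _).trans (hHonest _ hMne.choose_spec)
  have hTrimsHonest : ∀ T : Finset (Fin m), (#T : ℝ) = β * m → ∃ i ∈ T, i ∈ M := fun T hT =>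
    exists_mem_mem_of_card_compl_lt <| by
      have : (#Mᶜ : ℝ) < #T := by rw [hBcard, hT]; gcongr
      exact_mod_cast this
  have hUntrimmed : ∀ k ∉ Tlo ∪ Thi, |g k - μ| ≤ G := fun _ =>
    abs_sub_le_of_notMem_trimmed hlo hhi hHonest (hTrimsHonest _ hTlo) (hTrimsHonest _ hThi)
  have hSum := abs_sum_compl_le_abs_sum_add_nsmul (fun k => g k - μ) hG hHonest hUntrimmed
  rw [nsmul_eq_mul, Nat.cast_add, hBcard, hTcard] at hSum
  rw [← hUcard, sum_div_card_sub_eq_sum_sub_div _ _ _ (hUcard ▸ hD.ne'), abs_div, Nat.abs_cast,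
    hUcard]
  calc _ ≤ (|∑ k ∈ M, (g k - μ)| + (α * m + 2 * β * m) * G) / ((1 - 2 * β) * m) := by gcongr
    _ = _ := by field_simp; ring

/-- Deterministic trimmed-mean aggregation bound.  The honest set `M` has
`(1−α)m` elements, the Byzantine set `Mᶜ` has `αm` elements, and the trimmed
set consists of `Tlo` (the `βm` smallest values) and `Thi` (the `βm` largest
values).  If `β > α` then the `β`-trimmed mean (= average of the values over the
untrimmed set `(Tlo ∪ Thi)ᶜ`) satisfies
`|trmean − μ| ≤ (1/((1−2β)m))|∑_{k∈M}(g k − μ)| + ((2β+α)/(1−2β)) max_{k∈M}|g k − μ|`. -/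
theorem trimmed_mean_bound (m : ℕ) (hm : 0 < m) (α β : ℝ)
    (hα0 : 0 ≤ α) (hαβ : α < β) (hβ : β < 1 / 2)
    (g : Fin m → ℝ) (μ : ℝ)
    (M : Finset (Fin m)) (hMne : M.Nonempty)
    (hMcard : (M.card : ℝ) = (1 - α) * m)
    (hBcard : (Mᶜ.card : ℝ) = α * m)
    (Tlo Thi : Finset (Fin m)) (hdisj : Disjoint Tlo Thi)
    (hTlo : (Tlo.card : ℝ) = β * m) (hThi : (Thi.card : ℝ) = β * m)
    (hlo : ∀ i ∈ Tlo, ∀ j ∉ Tlo, g i ≤ g j)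
    (hhi : ∀ i ∈ Thi, ∀ j ∉ Thi, g j ≤ g i) :
    |(∑ k ∈ (Tlo ∪ Thi)ᶜ, g k) / ((1 - 2 * β) * m) - μ| ≤
      (1 / ((1 - 2 * β) * m)) * |∑ k ∈ M, (g k - μ)| +
        ((2 * β + α) / (1 - 2 * β)) * M.sup' hMne (fun k => |g k - μ|) :=
  trimmed_mean_bound_general m hm α β hαβ hβ g μ M hMne hBcard Tlo Thi hdisj hTlo hThi hlo hhi
end

section
/- In the setting of the trimmed-mean lemma: if β > α, then for every Byzantine index r in the untrimmed set (r ∈ B ∩ U), there exists an honest trimmed index i ∈ M ∩ T (where T = [m] \ U is the trimmed set) such that |g^{(i)} − μ| ≥ |g^{(r)} − μ|. Consequently |Σ_{k ∈ B ∩ U}(g^{(k)} − μ)| ≤ αm · max_{k ∈ M}|g^{(k)} − μ|. -/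
/-!
Each trimmed side has `βm > αm` members, so it contains an honest index. An untrimmed Byzantine
value therefore lies between two honest values, and its distance to `μ` is at most that of one of
them. There are at most `αm` untrimmed Byzantine indices, which gives the bound on the sum.
-/

open Finset

theorem Finset.inter_nonempty_of_card_compl_lt {α : Type*} [Fintype α] [DecidableEq α]
    {s t : Finset α} (h : #sᶜ < #t) : (s ∩ t).Nonempty := by
  rw [← not_disjoint_iff_nonempty_inter]
  intro hst
  exact (card_le_card (subset_compl_iff_disjoint_left.2 hst)).not_gt h

theorem Finset.abs_sum_le_card_mul {ι : Type*} {s : Finset ι} {f : ι → ℝ} {c : ℝ}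
    (h : ∀ i ∈ s, |f i| ≤ c) : |∑ i ∈ s, f i| ≤ #s * c :=
  (abs_sum_le_sum_abs f s).trans (by simpa using sum_le_card_nsmul s _ c h)

theorem exists_mem_trimmed_abs_sub_le {ι : Type*} [DecidableEq ι] {g : ι → ℝ} (μ : ℝ)
    {M Tlo Thi : Finset ι} (hlo : ∀ i ∈ Tlo, ∀ j ∉ Tlo, g i ≤ g j)
    (hhi : ∀ i ∈ Thi, ∀ j ∉ Thi, g j ≤ g i) (hMlo : (M ∩ Tlo).Nonempty)
    (hMhi : (M ∩ Thi).Nonempty) {r : ι} (hr : r ∉ Tlo ∪ Thi) :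
    ∃ i ∈ M ∩ (Tlo ∪ Thi), |g r - μ| ≤ |g i - μ| := by
  obtain ⟨a, haM, haT⟩ : ∃ a ∈ M, a ∈ Tlo := by simpa only [Finset.Nonempty, mem_inter] using hMlo
  obtain ⟨b, hbM, hbT⟩ : ∃ b ∈ M, b ∈ Thi := by simpa only [Finset.Nonempty, mem_inter] using hMhi
  rw [mem_union, not_or] at hr
  have hbetween : |g r - μ| ≤ max |g a - μ| |g b - μ| :=
    abs_le_max_abs_abs (sub_le_sub_right (hlo a haT r hr.1) μ)
      (sub_le_sub_right (hhi b hbT r hr.2) μ)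
  rcases le_max_iff.1 hbetween with h | h
  · exact ⟨a, mem_inter.2 ⟨haM, mem_union_left _ haT⟩, h⟩
  · exact ⟨b, mem_inter.2 ⟨hbM, mem_union_right _ hbT⟩, h⟩

theorem byzantine_untrimmed_bound_general (m : ℕ) (α β : ℝ)
    (hαβ : α < β)
    (g : Fin m → ℝ) (μ : ℝ)
    (M : Finset (Fin m)) (hMne : M.Nonempty)
    (hBcard : (Mᶜ.card : ℝ) = α * m)
    (Tlo Thi : Finset (Fin m))
    (hTlo : (Tlo.card : ℝ) = β * m) (hThi : (Thi.card : ℝ) = β * m)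
    (hlo : ∀ i ∈ Tlo, ∀ j ∉ Tlo, g i ≤ g j)
    (hhi : ∀ i ∈ Thi, ∀ j ∉ Thi, g j ≤ g i) :
    (∀ r ∈ Mᶜ ∩ (Tlo ∪ Thi)ᶜ, ∃ i ∈ M ∩ (Tlo ∪ Thi), |g r - μ| ≤ |g i - μ|) ∧
      |∑ k ∈ Mᶜ ∩ (Tlo ∪ Thi)ᶜ, (g k - μ)| ≤
        α * m * M.sup' hMne (fun k => |g k - μ|) := by
  have hm : (0 : ℝ) < m := Nat.cast_pos.2 hMne.choose.pos
  have hB_lt : ∀ T : Finset (Fin m), (#T : ℝ) = β * m → #Mᶜ < #T := fun T hT ↦ by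
    exact_mod_cast (hBcard.trans_lt (mul_lt_mul_of_pos_right hαβ hm)).trans_eq hT.symm
  have hdom : ∀ r ∈ Mᶜ ∩ (Tlo ∪ Thi)ᶜ, ∃ i ∈ M ∩ (Tlo ∪ Thi), |g r - μ| ≤ |g i - μ| :=
    fun r hr ↦ exists_mem_trimmed_abs_sub_le μ hlo hhi
      (inter_nonempty_of_card_compl_lt (hB_lt Tlo hTlo))
      (inter_nonempty_of_card_compl_lt (hB_lt Thi hThi)) (mem_compl.1 (mem_inter.1 hr).2)
  refine ⟨hdom, ?_⟩
  set D := M.sup' hMne (fun k => |g k - μ|)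
  have hD : ∀ k ∈ Mᶜ ∩ (Tlo ∪ Thi)ᶜ, |g k - μ| ≤ D := fun k hk ↦ by
    obtain ⟨i, hi, hle⟩ := hdom k hk
    exact hle.trans (le_sup' (fun k => |g k - μ|) (mem_inter.1 hi).1)
  have hD_nonneg : 0 ≤ D := (abs_nonneg _).trans (le_sup' (fun k => |g k - μ|) hMne.choose_spec)
  have hcard : (#(Mᶜ ∩ (Tlo ∪ Thi)ᶜ) : ℝ) ≤ α * m :=
    hBcard ▸ by exact_mod_cast card_le_card inter_subset_left
  exact (abs_sum_le_card_mul hD).trans (mul_le_mul_of_nonneg_right hcard hD_nonneg)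

/-- In the trimmed-mean setting with β > α:  every Byzantine index `r` in the
untrimmed set `U = (Tlo ∪ Thi)ᶜ` is dominated by some honest trimmed index
`i ∈ M ∩ (Tlo ∪ Thi)` with `|g i − μ| ≥ |g r − μ|`; consequently
`|∑_{k ∈ B ∩ U}(g k − μ)| ≤ αm · max_{k∈M}|g k − μ|`. -/
theorem byzantine_untrimmed_bound (m : ℕ) (hm : 0 < m) (α β : ℝ)
    (hα0 : 0 ≤ α) (hαβ : α < β) (hβ : β < 1 / 2)
    (g : Fin m → ℝ) (μ : ℝ)
    (M : Finset (Fin m)) (hMne : M.Nonempty)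
    (hMcard : (M.card : ℝ) = (1 - α) * m)
    (hBcard : (Mᶜ.card : ℝ) = α * m)
    (Tlo Thi : Finset (Fin m)) (hdisj : Disjoint Tlo Thi)
    (hTlo : (Tlo.card : ℝ) = β * m) (hThi : (Thi.card : ℝ) = β * m)
    (hlo : ∀ i ∈ Tlo, ∀ j ∉ Tlo, g i ≤ g j)
    (hhi : ∀ i ∈ Thi, ∀ j ∉ Thi, g j ≤ g i) :
    (∀ r ∈ Mᶜ ∩ (Tlo ∪ Thi)ᶜ, ∃ i ∈ M ∩ (Tlo ∪ Thi), |g r - μ| ≤ |g i - μ|) ∧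
      |∑ k ∈ Mᶜ ∩ (Tlo ∪ Thi)ᶜ, (g k - μ)| ≤
        α * m * M.sup' hMne (fun k => |g k - μ|) :=
  byzantine_untrimmed_bound_general m α β hαβ g μ M hMne hBcard Tlo Thi hTlo hThi hlo hhi
end

section
/- Sparsity bound from KKT conditions: suppose λ > 0, θ̂ satisfies the stationarity condition ∇L̂(θ̂) + λξ = 0 for some ξ in the subdifferential of ‖·‖₁ at θ̂, and let Ŝ = {j : θ̂_j ≠ 0} with ŝ = |Ŝ|. Then λ√ŝ ≤ ‖(∇L̂(θ̂))_Ŝ‖₂. If moreover ‖(∇L̂(θ̂) − ∇L̂(θ*))_Ŝ‖₂ ≤ c‖θ̂ − θ*‖₂, ‖∇L̂(θ*)‖_∞ ≤ λ/2 and ‖θ̂ − θ*‖₂ ≤ C'λ√s, then λ√ŝ ≤ √ŝ·(λ/2) + cC'λ√s, hence √ŝ ≤ 2cC'√s, i.e. ŝ ≤ 4(cC')² s. -/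
open Finset

lemma cs_sqrt (s : Finset ι) (f g : ι → ℝ) :
    ∑ i ∈ s, f i * g i ≤
      Real.sqrt (∑ i ∈ s, f i ^ 2) * Real.sqrt (∑ i ∈ s, g i ^ 2) := by
  calc ∑ i ∈ s, f i * g i ≤ |∑ i ∈ s, f i * g i| := le_abs_self _
    _ = Real.sqrt ((∑ i ∈ s, f i * g i) ^ 2) := (Real.sqrt_sq_eq_abs _).symm
    _ ≤ Real.sqrt ((∑ i ∈ s, f i ^ 2) * ∑ i ∈ s, g i ^ 2) :=
        Real.sqrt_le_sqrt (sum_mul_sq_le_sq_mul_sq s f g)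
    _ = _ := Real.sqrt_mul (by positivity) _

lemma sqrt_tri (s : Finset ι) (f g : ι → ℝ) :
    Real.sqrt (∑ i ∈ s, (f i + g i) ^ 2) ≤
      Real.sqrt (∑ i ∈ s, f i ^ 2) + Real.sqrt (∑ i ∈ s, g i ^ 2) := by
  set A := ∑ i ∈ s, f i ^ 2 with hA
  set B := ∑ i ∈ s, g i ^ 2 with hB
  have hA0 : 0 ≤ A := by positivity
  have hB0 : 0 ≤ B := by positivity
  rw [show (∑ i ∈ s, (f i + g i) ^ 2) = A + 2 * ∑ i ∈ s, f i * g i + B by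
    simp only [hA, hB, add_sq, Finset.sum_add_distrib, Finset.mul_sum]; ring_nf]
  have hcs : A + 2 * ∑ i ∈ s, f i * g i + B ≤ (Real.sqrt A + Real.sqrt B) ^ 2 := by
    nlinarith [cs_sqrt s f g, Real.sq_sqrt hA0, Real.sq_sqrt hB0, Real.sqrt_nonneg A, Real.sqrt_nonneg B]
  calc Real.sqrt (A + 2 * ∑ i ∈ s, f i * g i + B)
      ≤ Real.sqrt ((Real.sqrt A + Real.sqrt B) ^ 2) := Real.sqrt_le_sqrt hcs
    _ = Real.sqrt A + Real.sqrt B := Real.sqrt_sq (by positivity)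

/-- Sparsity bound from the KKT conditions.  Let `Ŝ = {j : θ̂ j ≠ 0}` and
`ŝ = |Ŝ|`.  Stationarity `G θ̂ + λξ = 0` with `ξ_j = sign(θ̂ j)` on `Ŝ` gives
`λ√ŝ ≤ ‖(G θ̂)_Ŝ‖₂`; if moreover `‖(G θ̂ − G θ*)_Ŝ‖₂ ≤ c‖θ̂ − θ*‖₂`,
`‖G θ*‖_∞ ≤ λ/2` and `‖θ̂ − θ*‖₂ ≤ C'λ√s`, then `ŝ ≤ 4(cC')² s`. -/
theorem sparsity_bound_kkt (d s : ℕ) (G : (Fin d → ℝ) → (Fin d → ℝ))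
    (lam c C' : ℝ) (hlam : 0 < lam) (hc : 0 < c) (hC' : 0 < C')
    (θhat θstar : Fin d → ℝ) (ξ : Fin d → ℝ)
    (hstat : ∀ j, G θhat j + lam * ξ j = 0)
    (hξ : ∀ j, θhat j ≠ 0 → ξ j = Real.sign (θhat j))
    (hξ0 : ∀ j, θhat j = 0 → |ξ j| ≤ 1) :
    lam * Real.sqrt ((Finset.univ.filter fun j => θhat j ≠ 0).card) ≤
      Real.sqrt (∑ j ∈ Finset.univ.filter fun j => θhat j ≠ 0, (G θhat j) ^ 2) ∧
    ((Real.sqrt (∑ j ∈ Finset.univ.filter fun j => θhat j ≠ 0,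
          (G θhat j - G θstar j) ^ 2) ≤
        c * Real.sqrt (∑ j, (θhat j - θstar j) ^ 2)) →
      (∀ j, |G θstar j| ≤ lam / 2) →
      (Real.sqrt (∑ j, (θhat j - θstar j) ^ 2) ≤ C' * lam * Real.sqrt s) →
      ((Finset.univ.filter fun j => θhat j ≠ 0).card : ℝ) ≤ 4 * (c * C') ^ 2 * s) := by
  set S := Finset.univ.filter fun j => θhat j ≠ 0 with hS
  have hsq : ∀ j ∈ S, (G θhat j) ^ 2 = lam ^ 2 := by
    intro j hj
    have hj' : θhat j ≠ 0 := by simpa [hS] using hj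
    have h1 : G θhat j = -(lam * ξ j) := by linarith [hstat j]
    have h2 : ξ j = Real.sign (θhat j) := hξ j hj'
    rcases lt_or_gt_of_ne hj' with h | h
    · rw [h1, h2, Real.sign_of_neg h]; ring
    · rw [h1, h2, Real.sign_of_pos h]; ring
  have hsum : (∑ j ∈ S, (G θhat j) ^ 2) = S.card * lam ^ 2 := by
    rw [Finset.sum_congr rfl hsq]; simp [mul_comm]
  have hkey : Real.sqrt (∑ j ∈ S, (G θhat j) ^ 2) = lam * Real.sqrt S.card := by
    rw [hsum, mul_comm, Real.sqrt_mul (by positivity), Real.sqrt_sq hlam.le]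
  refine ⟨hkey.ge, ?_⟩
  intro h1 h2 h3
  have hBle : Real.sqrt (∑ j ∈ S, (G θstar j) ^ 2) ≤ Real.sqrt S.card * (lam / 2) := by
    have : (∑ j ∈ S, (G θstar j) ^ 2) ≤ S.card * (lam / 2) ^ 2 := by
      calc (∑ j ∈ S, (G θstar j) ^ 2) ≤ ∑ _j ∈ S, (lam / 2) ^ 2 :=
            Finset.sum_le_sum fun j _ => by
              have := h2 j; nlinarith [abs_nonneg (G θstar j), sq_abs (G θstar j)]
        _ = S.card * (lam / 2) ^ 2 := by simp [mul_comm]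
    calc Real.sqrt (∑ j ∈ S, (G θstar j) ^ 2)
          ≤ Real.sqrt ((S.card : ℝ) * (lam / 2) ^ 2) := Real.sqrt_le_sqrt this
        _ = Real.sqrt S.card * (lam / 2) := by
            rw [Real.sqrt_mul (by positivity), Real.sqrt_sq (by linarith)]
  have htri : Real.sqrt (∑ j ∈ S, (G θhat j) ^ 2) ≤
      Real.sqrt (∑ j ∈ S, (G θhat j - G θstar j) ^ 2) +
      Real.sqrt (∑ j ∈ S, (G θstar j) ^ 2) := by
    have := sqrt_tri S (fun j => G θhat j - G θstar j) (fun j => G θstar j)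
    simpa using this
  have hs0 : Real.sqrt (∑ j, (θhat j - θstar j) ^ 2) ≤ C' * lam * Real.sqrt s := h3
  have hmain : lam * Real.sqrt S.card ≤
      c * (C' * lam * Real.sqrt s) + Real.sqrt S.card * (lam / 2) := by
    rw [← hkey]
    calc Real.sqrt (∑ j ∈ S, (G θhat j) ^ 2)
        ≤ Real.sqrt (∑ j ∈ S, (G θhat j - G θstar j) ^ 2) +
          Real.sqrt (∑ j ∈ S, (G θstar j) ^ 2) := htri
      _ ≤ c * (C' * lam * Real.sqrt s) + Real.sqrt S.card * (lam / 2) := by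
          gcongr
          exact h1.trans (by gcongr)
  have hfinal : Real.sqrt S.card ≤ 2 * (c * C') * Real.sqrt s := by
    have h := hmain
    nlinarith [Real.sqrt_nonneg (S.card : ℝ), Real.sqrt_nonneg (s : ℝ)]
  calc (S.card : ℝ) = Real.sqrt S.card ^ 2 := by
        rw [Real.sq_sqrt (by positivity)]
    _ ≤ (2 * (c * C') * Real.sqrt s) ^ 2 := by
        have h0 : (0:ℝ) ≤ Real.sqrt (S.card) := Real.sqrt_nonneg _
        have h1 : (0:ℝ) ≤ 2 * (c * C') * Real.sqrt s := by positivity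
        nlinarith [hfinal]
    _ = 4 * (c * C') ^ 2 * Real.sqrt s ^ 2 := by ring
    _ = 4 * (c * C') ^ 2 * s := by rw [Real.sq_sqrt (by positivity)]
end
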